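/- arXiv:2002.03293 — 2 statements merged into one kernel-verified Lean document; each statement's English description precedes it below -/
import Mathlib

section
/- If (u*, v*) minimizes h over ℝⁿ × ℝⁿ, then max{‖u*‖∞, ‖v*‖∞} ≤ τ·R. -/
/-- The dual entropic regularized UOT objective. -/
noncomputable def dualUOT {n : ℕ} (a b : Fin n → ℝ) (C : Fin n → Fin n → ℝ)
    (τ η : ℝ) (u v : Fin n → ℝ) : ℝ :=
  η * ∑ i, ∑ j, Real.exp ((u i + v j - C i j) / η)
    + τ * ∑ i, a i * Real.exp (-(u i) / τ)
    + τ * ∑ j, b j * Real.exp (-(v j) / τ)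

lemma gfun_pos {η τ : ℝ} (hη : 0 < η) (hτ : 0 < τ) {s : ℝ} (hs : s ≠ 0) :
    η + τ < η * Real.exp (s / η) + τ * Real.exp (-s / τ) := by
  have h1 : s / η + 1 < Real.exp (s / η) :=
    Real.add_one_lt_exp (div_ne_zero hs (ne_of_gt hη))
  have h2 : -s / τ + 1 ≤ Real.exp (-s / τ) := Real.add_one_le_exp _
  have e1 : η * (s / η + 1) = s + η := by field_simp
  have e2 : τ * (-s / τ + 1) = -s + τ := by field_simp
  nlinarith [mul_lt_mul_of_pos_left h1 hη, mul_le_mul_of_nonneg_left h2 (le_of_lt hτ)]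

lemma min1d {η τ α β t : ℝ} (hη : 0 < η) (hτ : 0 < τ) (hα : 0 < α) (hβ : 0 < β)
    (hmin : ∀ s, η * (α * Real.exp (t / η)) + τ * (β * Real.exp (-t / τ))
        ≤ η * (α * Real.exp (s / η)) + τ * (β * Real.exp (-s / τ))) :
    α * Real.exp (t / η) = β * Real.exp (-t / τ) := by
  set t0 : ℝ := (Real.log β - Real.log α) * (τ * η / (τ + η)) with ht0
  have hτη : 0 < τ + η := by linarith
  have hsum : t0 / η + t0 / τ = Real.log β - Real.log α := by
    rw [ht0]; field_simp
  have he : α * Real.exp (t0 / η) = β * Real.exp (-t0 / τ) := by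
    rw [← Real.exp_log hα, ← Real.exp_log hβ, ← Real.exp_add, ← Real.exp_add]
    congr 1
    have hneg : -t0 / τ = -(t0 / τ) := by ring
    rw [hneg]; linarith
  rcases eq_or_ne t t0 with h | h
  · rw [h]; exact he
  · exfalso
    have hs : t - t0 ≠ 0 := sub_ne_zero.mpr h
    have hc : 0 < α * Real.exp (t0 / η) := by positivity
    have l1 : η * (α * Real.exp (t / η))
        = η * ((α * Real.exp (t0 / η)) * Real.exp ((t - t0) / η)) := by
      rw [show t / η = t0 / η + (t - t0) / η from by ring, Real.exp_add]; ring
    have l2 : τ * (β * Real.exp (-t / τ))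
        = τ * ((α * Real.exp (t0 / η)) * Real.exp (-(t - t0) / τ)) := by
      rw [show -t / τ = -t0 / τ + (-(t - t0)) / τ from by ring, Real.exp_add]
      linear_combination (-(τ * Real.exp (-(t - t0) / τ))) * he
    have hmin0 := hmin t0
    rw [l1, l2, ← he] at hmin0
    have hkey := gfun_pos hη hτ hs
    nlinarith [mul_lt_mul_of_pos_left hkey hc, hmin0]

lemma foc_u {n : ℕ} (hn : 0 < n) (a : Fin n → ℝ) (ha : ∀ i, 0 < a i)
    (b : Fin n → ℝ) (C : Fin n → Fin n → ℝ) (τ η : ℝ) (hτ : 0 < τ) (hη : 0 < η)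
    (u v : Fin n → ℝ)
    (hmin : ∀ u', dualUOT a b C τ η u v ≤ dualUOT a b C τ η u' v) (i : Fin n) :
    (∑ j, Real.exp ((v j - C i j) / η)) * Real.exp (u i / η)
      = a i * Real.exp (-(u i) / τ) := by
  set α : ℝ := ∑ j, Real.exp ((v j - C i j) / η) with hαdef
  have hαpos : 0 < α := Finset.sum_pos (fun j _ => Real.exp_pos _)
    ⟨⟨0, hn⟩, Finset.mem_univ _⟩
  set D : ℝ := η * ∑ k ∈ Finset.univ.erase i, ∑ j, Real.exp ((u k + v j - C k j) / η)
      + τ * ∑ k ∈ Finset.univ.erase i, a k * Real.exp (-(u k) / τ)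
      + τ * ∑ j, b j * Real.exp (-(v j) / τ) with hD
  have key : ∀ t, dualUOT a b C τ η (Function.update u i t) v
      = η * (α * Real.exp (t / η)) + τ * (a i * Real.exp (-t / τ)) + D := by
    intro t
    unfold dualUOT
    rw [← Finset.add_sum_erase Finset.univ
        (fun k => ∑ j, Real.exp ((Function.update u i t k + v j - C k j) / η))
        (Finset.mem_univ i),
        ← Finset.add_sum_erase Finset.univ
        (fun k => a k * Real.exp (-(Function.update u i t k) / τ)) (Finset.mem_univ i)]
    have h1 : ∑ j, Real.exp ((Function.update u i t i + v j - C i j) / η)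
        = α * Real.exp (t / η) := by
      rw [hαdef, Finset.sum_mul]
      refine Finset.sum_congr rfl fun j _ => ?_
      rw [Function.update_self, ← Real.exp_add]
      congr 1; ring
    have h2 : ∑ k ∈ Finset.univ.erase i, ∑ j, Real.exp ((Function.update u i t k + v j - C k j) / η)
        = ∑ k ∈ Finset.univ.erase i, ∑ j, Real.exp ((u k + v j - C k j) / η) := by
      refine Finset.sum_congr rfl fun k hk => ?_
      rw [Function.update_of_ne (Finset.ne_of_mem_erase hk)]
    have h3 : ∑ k ∈ Finset.univ.erase i, a k * Real.exp (-(Function.update u i t k) / τ)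
        = ∑ k ∈ Finset.univ.erase i, a k * Real.exp (-(u k) / τ) := by
      refine Finset.sum_congr rfl fun k hk => ?_
      rw [Function.update_of_ne (Finset.ne_of_mem_erase hk)]
    rw [h1, h2, h3, Function.update_self, hD]
    ring
  have hmin' : ∀ s, η * (α * Real.exp ((u i) / η)) + τ * (a i * Real.exp (-(u i) / τ))
      ≤ η * (α * Real.exp (s / η)) + τ * (a i * Real.exp (-s / τ)) := by
    intro s
    have h0 := key (u i)
    rw [Function.update_eq_self] at h0
    have h1 := key s
    have h2 := hmin (Function.update u i s)
    rw [h0, h1] at h2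
    linarith
  exact min1d hη hτ hαpos (ha i) hmin'

lemma dualUOT_swap {n : ℕ} (a b : Fin n → ℝ) (C : Fin n → Fin n → ℝ) (τ η : ℝ)
    (u v : Fin n → ℝ) :
    dualUOT a b C τ η u v = dualUOT b a (fun p q => C q p) τ η v u := by
  unfold dualUOT
  rw [Finset.sum_comm]
  have h : ∀ j i, Real.exp ((u i + v j - C i j) / η)
      = Real.exp ((v j + u i - C i j) / η) := by
    intro j i; congr 1; ring
  simp_rw [h]
  ring

lemma foc_v {n : ℕ} (hn : 0 < n) (a : Fin n → ℝ)
    (b : Fin n → ℝ) (hb : ∀ j, 0 < b j) (C : Fin n → Fin n → ℝ)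
    (τ η : ℝ) (hτ : 0 < τ) (hη : 0 < η) (u v : Fin n → ℝ)
    (hmin : ∀ v', dualUOT a b C τ η u v ≤ dualUOT a b C τ η u v') (j : Fin n) :
    (∑ i, Real.exp ((u i - C i j) / η)) * Real.exp (v j / η)
      = b j * Real.exp (-(v j) / τ) := by
  have h := foc_u hn b hb a (fun p q => C q p) τ η hτ hη v u
    (fun v' => by
      have h := hmin v'
      rw [dualUOT_swap a b C τ η u v, dualUOT_swap a b C τ η u v'] at h
      exact h) j
  simpa using h

lemma norm_transpose {n : ℕ} (C : Fin n → Fin n → ℝ) : ‖(fun p q => C q p)‖ = ‖C‖ := by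
  have key : ∀ (D : Fin n → Fin n → ℝ), ‖(fun p q => D q p)‖ ≤ ‖D‖ := by
    intro D
    rw [pi_norm_le_iff_of_nonneg (norm_nonneg _)]
    intro p
    rw [pi_norm_le_iff_of_nonneg (norm_nonneg _)]
    intro q
    exact le_trans (norm_le_pi_norm (D q) p) (norm_le_pi_norm D q)
  refine le_antisymm (key C) ?_
  exact key (fun p q => C q p)

lemma norm_bound_aux {n : ℕ} (hn : 0 < n) (a : Fin n → ℝ) (ha : ∀ i, 0 < a i)
    (C : Fin n → Fin n → ℝ) (hC : ∀ i j, 0 ≤ C i j) (τ η : ℝ) (hτ : 0 < τ) (hη : 0 < η)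
    (u v : Fin n → ℝ)
    (hfoc : ∀ i, (∑ j, Real.exp ((v j - C i j) / η)) * Real.exp (u i / η)
      = a i * Real.exp (-(u i) / τ)) :
    ‖u‖ * (η + τ)
      ≤ (‖(fun i => Real.log (a i))‖ + max (Real.log n) (‖C‖ / η - Real.log n) + ‖v‖ / η)
          * (η * τ) := by
  set K := max (Real.log n) (‖C‖ / η - Real.log n) with hK
  set B := ‖(fun i => Real.log (a i))‖ + K + ‖v‖ / η with hB
  have hn1 : (1:ℝ) ≤ n := by exact_mod_cast hn
  have hlogn : 0 ≤ Real.log n := Real.log_nonneg hn1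
  have hK1 : Real.log n ≤ K := le_max_left _ _
  have hK2 : ‖C‖ / η - Real.log n ≤ K := le_max_right _ _
  have hvη : 0 ≤ ‖v‖ / η := by positivity
  have hna : 0 ≤ ‖(fun i => Real.log (a i))‖ := norm_nonneg _
  have hB0 : 0 ≤ B := by rw [hB]; linarith
  have hne : (n:ℝ) ≠ 0 := by positivity
  have hpos : (0:ℝ) < η * τ := mul_pos hη hτ
  have key : ∀ i, |u i| * (η + τ) ≤ B * (η * τ) := by
    intro i
    set α := ∑ j, Real.exp ((v j - C i j) / η) with hα
    have hαpos : 0 < α := Finset.sum_pos (fun j _ => Real.exp_pos _)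
      ⟨⟨0, hn⟩, Finset.mem_univ _⟩
    have E : Real.log α + u i / η = Real.log (a i) + -(u i / τ) := by
      have h := congrArg Real.log (hfoc i)
      rwa [Real.log_mul (ne_of_gt hαpos) (Real.exp_ne_zero _), Real.log_exp,
        Real.log_mul (ne_of_gt (ha i)) (Real.exp_ne_zero _), Real.log_exp, neg_div] at h
    have hvb : ∀ j, |v j| ≤ ‖v‖ := fun j => by
      have h := norm_le_pi_norm v j; rwa [Real.norm_eq_abs] at h
    have hCb : ∀ j, |C i j| ≤ ‖C‖ := fun j => by
      have h1 := norm_le_pi_norm (C i) j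
      have h2 := norm_le_pi_norm C i
      rw [Real.norm_eq_abs] at h1
      linarith
    have hαhi : Real.log α ≤ Real.log n + ‖v‖ / η := by
      have h1 : α ≤ (n:ℝ) * Real.exp (‖v‖ / η) := by
        calc α ≤ ∑ _j : Fin n, Real.exp (‖v‖ / η) := by
              apply Finset.sum_le_sum
              intro j _
              apply Real.exp_le_exp.mpr
              apply (div_le_div_iff_of_pos_right hη).mpr
              have h3 := hvb j
              have h4 := hC i j
              have h5 := le_abs_self (v j)
              linarith
          _ = (n:ℝ) * Real.exp (‖v‖ / η) := by
              rw [Finset.sum_const, Finset.card_univ, Fintype.card_fin, nsmul_eq_mul]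
      calc Real.log α ≤ Real.log ((n:ℝ) * Real.exp (‖v‖ / η)) := Real.log_le_log hαpos h1
        _ = Real.log n + ‖v‖ / η := by
            rw [Real.log_mul hne (Real.exp_ne_zero _), Real.log_exp]
    have hαlo : Real.log n + (-‖v‖ - ‖C‖) / η ≤ Real.log α := by
      have h1 : (n:ℝ) * Real.exp ((-‖v‖ - ‖C‖) / η) ≤ α := by
        calc (n:ℝ) * Real.exp ((-‖v‖ - ‖C‖) / η)
            = ∑ _j : Fin n, Real.exp ((-‖v‖ - ‖C‖) / η) := by
              rw [Finset.sum_const, Finset.card_univ, Fintype.card_fin, nsmul_eq_mul]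
          _ ≤ α := by
              apply Finset.sum_le_sum
              intro j _
              apply Real.exp_le_exp.mpr
              apply (div_le_div_iff_of_pos_right hη).mpr
              have h3 := neg_abs_le (v j)
              have h4 := le_abs_self (C i j)
              have h5 := hvb j
              have h6 := hCb j
              have h7 := abs_nonneg (v j)
              linarith
      calc Real.log n + (-‖v‖ - ‖C‖) / η
          = Real.log ((n:ℝ) * Real.exp ((-‖v‖ - ‖C‖) / η)) := by
            rw [Real.log_mul hne (Real.exp_ne_zero _), Real.log_exp]
        _ ≤ Real.log α := Real.log_le_log (by positivity) h1
    have hla : |Real.log (a i)| ≤ ‖(fun i => Real.log (a i))‖ := by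
      have h := norm_le_pi_norm (fun k => Real.log (a k)) i
      rwa [Real.norm_eq_abs] at h
    have hsplit : (-‖v‖ - ‖C‖) / η = -(‖v‖ / η) - ‖C‖ / η := by ring
    rw [hsplit] at hαlo
    have hup : u i / η + u i / τ ≤ B := by
      have h5 := le_abs_self (Real.log (a i))
      rw [hB]; linarith
    have hdn : -B ≤ u i / η + u i / τ := by
      have h5 := neg_abs_le (Real.log (a i))
      rw [hB]; linarith
    have hmul : (u i / η + u i / τ) * (η * τ) = u i * (η + τ) := by field_simp; ring
    have h6 : u i * (η + τ) ≤ B * (η * τ) := by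
      have h := mul_le_mul_of_nonneg_right hup hpos.le
      rwa [hmul] at h
    have h7 : -(B * (η * τ)) ≤ u i * (η + τ) := by
      have h := mul_le_mul_of_nonneg_right hdn hpos.le
      rw [hmul] at h
      linarith
    rcases abs_cases (u i) with ⟨h8, _⟩ | ⟨h8, _⟩
    · rw [h8]; exact h6
    · rw [h8]; linarith
  have hnorm : ‖u‖ ≤ B * (η * τ) / (η + τ) := by
    have hden : (0:ℝ) < η + τ := by linarith
    refine (pi_norm_le_iff_of_nonneg ?_).mpr ?_
    · exact div_nonneg (mul_nonneg hB0 hpos.le) hden.le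
    · intro i
      rw [Real.norm_eq_abs, le_div_iff₀ hden]
      exact key i
  calc ‖u‖ * (η + τ) ≤ (B * (η * τ) / (η + τ)) * (η + τ) :=
        mul_le_mul_of_nonneg_right hnorm (by linarith)
    _ = B * (η * τ) := by field_simp

/-- If `(u*, v*)` minimizes `h`, then `max{‖u*‖∞, ‖v*‖∞} ≤ τ·R` where
`R = max{‖log a‖∞, ‖log b‖∞} + max{log n, ‖C‖∞/η − log n}`. -/
theorem stmt_4 {n : ℕ} (hn : 2 ≤ n) (a b : Fin n → ℝ)
    (ha : ∀ i, 0 < a i) (hb : ∀ j, 0 < b j)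
    (C : Fin n → Fin n → ℝ) (hC : ∀ i j, 0 ≤ C i j)
    (τ η : ℝ) (hτ : 0 < τ) (hη : 0 < η)
    (ustar vstar : Fin n → ℝ)
    (hmin : ∀ u v : Fin n → ℝ, dualUOT a b C τ η ustar vstar ≤ dualUOT a b C τ η u v) :
    max ‖ustar‖ ‖vstar‖
      ≤ τ * (max ‖(fun i => Real.log (a i))‖ ‖(fun j => Real.log (b j))‖
          + max (Real.log n) (‖C‖ / η - Real.log n)) := by
  have hn0 : 0 < n := by omega
  have hfu : ∀ i, (∑ j, Real.exp ((vstar j - C i j) / η)) * Real.exp (ustar i / η)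
      = a i * Real.exp (-(ustar i) / τ) :=
    fun i => foc_u hn0 a ha b C τ η hτ hη ustar vstar (fun u' => hmin u' vstar) i
  have hfv : ∀ j, (∑ i, Real.exp ((ustar i - C i j) / η)) * Real.exp (vstar j / η)
      = b j * Real.exp (-(vstar j) / τ) :=
    fun j => foc_v hn0 a b hb C τ η hτ hη ustar vstar (fun v' => hmin ustar v') j
  have h1 := norm_bound_aux hn0 a ha C hC τ η hτ hη ustar vstar hfu
  have h2 := norm_bound_aux hn0 b hb (fun p q => C q p) (fun p q => hC q p) τ η hτ hη
    vstar ustar (fun j => by simpa using hfv j)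
  rw [norm_transpose] at h2
  set A := max ‖(fun i => Real.log (a i))‖ ‖(fun j => Real.log (b j))‖ with hA
  set K := max (Real.log n) (‖C‖ / η - Real.log n) with hKdef
  set M := max ‖ustar‖ ‖vstar‖ with hM
  have hMu : ‖ustar‖ ≤ M := le_max_left _ _
  have hMv : ‖vstar‖ ≤ M := le_max_right _ _
  have hAa : ‖(fun i => Real.log (a i))‖ ≤ A := le_max_left _ _
  have hAb : ‖(fun j => Real.log (b j))‖ ≤ A := le_max_right _ _
  have hpos : (0:ℝ) < η * τ := mul_pos hη hτ
  have h1' : ‖ustar‖ * (η + τ) ≤ (A + K + M / η) * (η * τ) := by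
    refine le_trans h1 (mul_le_mul_of_nonneg_right ?_ hpos.le)
    have hd : ‖vstar‖ / η ≤ M / η := (div_le_div_iff_of_pos_right hη).mpr hMv
    linarith
  have h2' : ‖vstar‖ * (η + τ) ≤ (A + K + M / η) * (η * τ) := by
    refine le_trans h2 (mul_le_mul_of_nonneg_right ?_ hpos.le)
    have hd : ‖ustar‖ / η ≤ M / η := (div_le_div_iff_of_pos_right hη).mpr hMu
    linarith
  have hfin : M * (η + τ) ≤ (A + K + M / η) * (η * τ) := by
    rcases max_cases ‖ustar‖ ‖vstar‖ with ⟨hm, _⟩ | ⟨hm, _⟩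
    · calc M * (η + τ) = ‖ustar‖ * (η + τ) := by rw [hM, hm]
        _ ≤ _ := h1'
    · calc M * (η + τ) = ‖vstar‖ * (η + τ) := by rw [hM, hm]
        _ ≤ _ := h2'
  have hq : M / η * (η * τ) = M * τ := by field_simp
  have h9 : M * η ≤ (τ * (A + K)) * η := by nlinarith [hfin, hq]
  exact le_of_mul_le_mul_right h9 hη
end

section
/- Assume 4·η·log n ≤ τ. If X* minimizes g over the set of n×n matrices with nonnegative entries and x* = Σ_{i,j} X*ᵢⱼ, then x* ≤ (1/2 + η·log n/(2τ − 2η·log n))·(α+β) + 1/(6·log n). -/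
/-!
Scaling a matrix by `t > 0` changes `g` only through terms linear in `t` and the term
`(η + 2τ) · x · t log t`, so minimality of `X*` along the ray `t ↦ t X*` forces the radial
derivative `⟨C, X*⟩ + η Σ X* log X* + τ Σ rᵢ log (rᵢ / aᵢ) + τ Σ cⱼ log (cⱼ / bⱼ)` to vanish
(`r`, `c` the row and column sums). The log-sum inequality bounds it below by
`x* ((2τ + η) log x* - 2η log n - τ log α - τ log β)`. Concavity of `log` (with weights
`τ, τ, η` at `α, β, 1`) and `exp z ≤ 1 / (1 - z)` turn the resulting bound on `log x*` into the
linear one.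
-/

/-- Generalized KL divergence, with the convention `0 · log 0 = 0`. -/
noncomputable def KL {n : ℕ} (x y : Fin n → ℝ) : ℝ :=
  ∑ i, (x i * Real.log (x i / y i) - x i + y i)

/-- Entropy of a nonnegative matrix, with the convention `0 · log 0 = 0`. -/
noncomputable def entH {n : ℕ} (X : Fin n → Fin n → ℝ) : ℝ :=
  -∑ i, ∑ j, X i j * (Real.log (X i j) - 1)

/-- The entropic regularized UOT objective. -/
noncomputable def entUOT {n : ℕ} (a b : Fin n → ℝ) (C : Fin n → Fin n → ℝ)
    (τ η : ℝ) (X : Fin n → Fin n → ℝ) : ℝ :=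
  (∑ i, ∑ j, C i j * X i j) - η * entH X
    + τ * KL (fun i => ∑ j, X i j) a + τ * KL (fun j => ∑ i, X i j) b

open Real Finset

theorem sum_mul_log_div_sum_le_sum_mul_log_div {ι : Type*} (s : Finset ι) (f g : ι → ℝ)
    (hf : ∀ i ∈ s, 0 ≤ f i) (hg : ∀ i ∈ s, 0 < g i) :
    (∑ i ∈ s, f i) * log ((∑ i ∈ s, f i) / ∑ i ∈ s, g i) ≤ ∑ i ∈ s, f i * log (f i / g i) := by
  rcases s.eq_empty_or_nonempty with rfl | hs
  · simp
  set G := ∑ i ∈ s, g i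
  have hG : 0 < G := sum_pos hg hs
  have hJensen := convexOn_mul_log.map_sum_le (t := s) (w := fun i => g i / G)
    (p := fun i => f i / g i) (fun i hi => (div_pos (hg i hi) hG).le)
    (by rw [← sum_div, div_self hG.ne']) (fun i hi => div_nonneg (hf i hi) (hg i hi).le)
  have hw : ∀ i ∈ s, g i / G * (f i / g i) = f i / G := fun i hi => by
    field_simp [(hg i hi).ne']
  simp only [smul_eq_mul, sum_congr rfl hw, ← sum_div] at hJensen
  calc (∑ i ∈ s, f i) * log ((∑ i ∈ s, f i) / G)
      = G * ((∑ i ∈ s, f i) / G * log ((∑ i ∈ s, f i) / G)) := by field_simp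
    _ ≤ G * ∑ i ∈ s, g i / G * (f i / g i * log (f i / g i)) := by gcongr
    _ = ∑ i ∈ s, f i * log (f i / g i) := by
      rw [mul_sum]
      refine sum_congr rfl fun i hi => ?_
      field_simp [(hg i hi).ne']

theorem mul_mul_log_mul_div {t c : ℝ} (ht : t ≠ 0) (hc : c ≠ 0) (x : ℝ) :
    t * x * log (t * x / c) = t * (x * log (x / c)) + x * (t * log t) := by
  rcases eq_or_ne x 0 with rfl | hx
  · simp
  rw [mul_div_assoc, log_mul ht (div_ne_zero hx hc)]
  ring

theorem eq_zero_of_isMinOn_mul_add_mul_log {D K : ℝ}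
    (h : IsMinOn (fun t => t * D + K * (t * log t - t)) (Set.Ioi 0) 1) : D = 0 := by
  have hderiv : HasDerivAt (fun t => t * D + K * (t * log t - t)) D 1 := by
    refine (((hasDerivAt_id' 1).mul_const D).add
      (((hasDerivAt_mul_log one_ne_zero).sub (hasDerivAt_id' 1)).const_mul K)).congr_deriv ?_
    simp
  exact (h.isLocalMin (Ioi_mem_nhds one_pos)).hasDerivAt_eq_zero hderiv

theorem log_le_of_mul_log_div_le_zero {N τ η A B s : ℝ} (hN : 0 < N) (hA : 0 < A)
    (hB : 0 < B) (hs : 0 < s)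
    (h : s * (η * log (s / N ^ 2) + τ * log (s / A) + τ * log (s / B)) ≤ 0) :
    (2 * τ + η) * log s ≤ 2 * η * log N + τ * log A + τ * log B := by
  have h' := nonpos_of_mul_nonpos_right h hs
  rw [log_div hs.ne' (by positivity), log_div hs.ne' hA.ne', log_div hs.ne' hB.ne',
    log_pow] at h'
  push_cast at h'
  linarith

theorem le_of_mul_log_div_le_zero {N τ η A B s : ℝ} (hN : 1 < N) (hη : 0 < η)
    (hητ : 4 * η * log N ≤ τ) (hA : 0 < A) (hB : 0 < B) (hs : 0 ≤ s)
    (h : s * (η * log (s / N ^ 2) + τ * log (s / A) + τ * log (s / B)) ≤ 0) :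
    s ≤ (1 / 2 + η * log N / (2 * τ - 2 * η * log N)) * (A + B) + 1 / (6 * log N) := by
  set L := log N
  have hL : 0 < L := log_pos hN
  have hηL : 0 < η * L := mul_pos hη hL
  have hτL : 0 < τ - η * L := by linarith
  have hτ : 0 < τ := by linarith
  have hcoef : 1 / 2 + η * L / (2 * τ - 2 * η * L) = τ / (2 * (τ - η * L)) := by
    field_simp
    ring
  rw [hcoef]
  rcases hs.eq_or_lt with rfl | hs
  · positivity
  set σ := 2 * τ + η with hσ_def
  have hσ : 0 < σ := by positivity
  have hkey := log_le_of_mul_log_div_le_zero (by linarith) hA hB hs h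
  have hJensen : τ / σ * log A + τ / σ * log B + η / σ * log 1
      ≤ log (τ / σ * A + τ / σ * B + η / σ) := by
    have := strictConcaveOn_log_Ioi.concaveOn.le_map_sum (t := univ)
      (w := ![τ / σ, τ / σ, η / σ]) (p := ![A, B, 1])
      (by intro i _; fin_cases i <;> simp <;> positivity)
      (by simp [Fin.sum_univ_three]; field_simp; rw [hσ_def]; ring)
      (by simp [Fin.forall_fin_succ, hA, hB])
    simpa [Fin.sum_univ_three] using this
  have hlog : log s ≤ 2 * η * L / σ + log ((τ * (A + B) + η) / σ) := by
    rw [show τ / σ * A + τ / σ * B + η / σ = (τ * (A + B) + η) / σ by ring, log_one] at hJensen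
    have hsplit : 2 * η * L / σ + (τ / σ * log A + τ / σ * log B + η / σ * 0)
        = (2 * η * L + τ * log A + τ * log B) / σ := by ring
    have hdiv : log s ≤ (2 * η * L + τ * log A + τ * log B) / σ := by
      rw [le_div_iff₀ hσ]
      linarith
    linarith
  have hexp : exp (2 * η * L / σ) ≤ σ / (2 * (τ - η * L)) := by
    have hz : (η + 2 * η * L) / σ < 1 := by rw [div_lt_one hσ]; linarith
    calc exp (2 * η * L / σ) ≤ exp ((η + 2 * η * L) / σ) := by gcongr; linarith
      _ ≤ 1 / (1 - (η + 2 * η * L) / σ) := exp_bound_div_one_sub_of_interval (by positivity) hz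
      _ = σ / (2 * (τ - η * L)) := by
        rw [one_sub_div hσ.ne', one_div_div, hσ_def]
        ring_nf
  calc s = exp (log s) := (exp_log hs).symm
    _ ≤ exp (2 * η * L / σ) * ((τ * (A + B) + η) / σ) := by
      rw [← exp_log (by positivity : 0 < (τ * (A + B) + η) / σ), ← exp_add]
      exact exp_le_exp.2 hlog
    _ ≤ σ / (2 * (τ - η * L)) * ((τ * (A + B) + η) / σ) := by gcongr
    _ = τ / (2 * (τ - η * L)) * (A + B) + η / (2 * (τ - η * L)) := by field_simp
    _ ≤ τ / (2 * (τ - η * L)) * (A + B) + 1 / (6 * L) := by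
      refine (add_le_add_iff_left _).2 ?_
      rw [div_le_div_iff₀ (by positivity) (by positivity)]
      linarith

section entUOT

variable {n : ℕ} (a b : Fin n → ℝ) (C : Fin n → Fin n → ℝ) (τ η : ℝ)

def mass (X : Fin n → Fin n → ℝ) : ℝ := ∑ i, ∑ j, X i j

/-- The derivative of `t ↦ entUOT a b C τ η (t • X)` at `t = 1`, see `entUOT_smul`. -/
noncomputable def entUOTRadialDeriv (X : Fin n → Fin n → ℝ) : ℝ :=
  (∑ i, ∑ j, C i j * X i j) + η * ∑ i, ∑ j, X i j * log (X i j)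
    + τ * ∑ i, (∑ j, X i j) * log ((∑ j, X i j) / a i)
    + τ * ∑ j, (∑ i, X i j) * log ((∑ i, X i j) / b j)

theorem entUOT_eq (X : Fin n → Fin n → ℝ) :
    entUOT a b C τ η X = entUOTRadialDeriv a b C τ η X - (η + 2 * τ) * mass X
      + τ * ((∑ i, a i) + ∑ j, b j) := by
  simp only [entUOT, entH, KL, entUOTRadialDeriv, mass, mul_sub, mul_one, sum_sub_distrib,
    sum_add_distrib]
  rw [sum_comm (f := fun j i => X i j)]
  ring

theorem mass_smul (t : ℝ) (X : Fin n → Fin n → ℝ) : mass (t • X) = t * mass X := by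
  simp [mass, mul_sum]

variable {a b} in
theorem entUOTRadialDeriv_smul (ha : ∀ i, a i ≠ 0) (hb : ∀ j, b j ≠ 0) {t : ℝ} (ht : t ≠ 0)
    (X : Fin n → Fin n → ℝ) :
    entUOTRadialDeriv a b C τ η (t • X)
      = t * entUOTRadialDeriv a b C τ η X + (η + 2 * τ) * mass X * (t * log t) := by
  have hxlogx := fun x => by simpa using mul_mul_log_mul_div ht one_ne_zero x
  simp only [entUOTRadialDeriv, mass, Pi.smul_apply, smul_eq_mul, ← mul_sum,
    mul_mul_log_mul_div ht (ha _), mul_mul_log_mul_div ht (hb _), hxlogx, sum_add_distrib]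
  simp only [← sum_mul, mul_left_comm _ t, ← mul_sum]
  rw [sum_comm (f := fun j i => X i j)]
  ring

variable {a b} in
theorem entUOT_smul (ha : ∀ i, a i ≠ 0) (hb : ∀ j, b j ≠ 0) {t : ℝ} (ht : t ≠ 0)
    (X : Fin n → Fin n → ℝ) :
    entUOT a b C τ η (t • X) = t * entUOTRadialDeriv a b C τ η X
      + (η + 2 * τ) * mass X * (t * log t - t) + τ * ((∑ i, a i) + ∑ j, b j) := by
  rw [entUOT_eq, entUOTRadialDeriv_smul C τ η ha hb ht, mass_smul]
  ring

variable {a b C τ η} in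
theorem entUOTRadialDeriv_eq_zero_of_isMin (ha : ∀ i, a i ≠ 0) (hb : ∀ j, b j ≠ 0)
    {X : Fin n → Fin n → ℝ} (hX : ∀ i j, 0 ≤ X i j)
    (hmin : ∀ Y : Fin n → Fin n → ℝ, (∀ i j, 0 ≤ Y i j) →
      entUOT a b C τ η X ≤ entUOT a b C τ η Y) :
    entUOTRadialDeriv a b C τ η X = 0 := by
  refine eq_zero_of_isMinOn_mul_add_mul_log (K := (η + 2 * τ) * mass X) fun t (ht : 0 < t) => ?_
  have hle := hmin (t • X) fun i j => mul_nonneg ht.le (hX i j)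
  rw [entUOT_smul C τ η ha hb ht.ne', ← one_smul ℝ X, entUOT_smul C τ η ha hb one_ne_zero,
    one_smul] at hle
  simpa using hle

variable {a b C τ η} in
theorem mass_mul_log_le_entUOTRadialDeriv (ha : ∀ i, 0 < a i) (hb : ∀ j, 0 < b j)
    (hC : ∀ i j, 0 ≤ C i j) (hτ : 0 ≤ τ) (hη : 0 ≤ η)
    {X : Fin n → Fin n → ℝ} (hX : ∀ i j, 0 ≤ X i j) :
    mass X * (η * log (mass X / (n : ℝ) ^ 2) + τ * log (mass X / ∑ i, a i)
      + τ * log (mass X / ∑ j, b j)) ≤ entUOTRadialDeriv a b C τ η X := by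
  have hcost : 0 ≤ ∑ i, ∑ j, C i j * X i j :=
    sum_nonneg fun i _ => sum_nonneg fun j _ => mul_nonneg (hC i j) (hX i j)
  have hent : mass X * log (mass X / (n : ℝ) ^ 2) ≤ ∑ i, ∑ j, X i j * log (X i j) := by
    have := sum_mul_log_div_sum_le_sum_mul_log_div univ (fun p : Fin n × Fin n => X p.1 p.2)
      (fun _ => 1) (fun p _ => hX p.1 p.2) (fun _ _ => one_pos)
    simpa [Fintype.sum_prod_type, mass, sq] using this
  have hrow : mass X * log (mass X / ∑ i, a i)
      ≤ ∑ i, (∑ j, X i j) * log ((∑ j, X i j) / a i) :=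
    sum_mul_log_div_sum_le_sum_mul_log_div univ _ a
      (fun i _ => sum_nonneg fun j _ => hX i j) fun i _ => ha i
  have hcol : mass X * log (mass X / ∑ j, b j)
      ≤ ∑ j, (∑ i, X i j) * log ((∑ i, X i j) / b j) := by
    rw [mass, sum_comm]
    exact sum_mul_log_div_sum_le_sum_mul_log_div univ _ b
      (fun j _ => sum_nonneg fun i _ => hX i j) fun j _ => hb j
  rw [entUOTRadialDeriv]
  linarith [mul_le_mul_of_nonneg_left hent hη, mul_le_mul_of_nonneg_left hrow hτ,
    mul_le_mul_of_nonneg_left hcol hτ]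

end entUOT

/-- Assuming `4·η·log n ≤ τ`, if `X*` minimizes `g` over nonnegative matrices, then
`x* ≤ (1/2 + η·log n/(2τ − 2η·log n))·(α+β) + 1/(6·log n)`. -/
theorem stmt_11 {n : ℕ} (hn : 2 ≤ n) (a b : Fin n → ℝ)
    (ha : ∀ i, 0 < a i) (hb : ∀ j, 0 < b j)
    (C : Fin n → Fin n → ℝ) (hC : ∀ i j, 0 ≤ C i j)
    (τ η : ℝ) (hτ : 0 < τ) (hη : 0 < η)
    (hητ : 4 * η * Real.log n ≤ τ)
    (Xstar : Fin n → Fin n → ℝ) (hXstar : ∀ i j, 0 ≤ Xstar i j)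
    (hmin : ∀ Y : Fin n → Fin n → ℝ, (∀ i j, 0 ≤ Y i j) →
      entUOT a b C τ η Xstar ≤ entUOT a b C τ η Y) :
    (∑ i, ∑ j, Xstar i j)
      ≤ (1 / 2 + η * Real.log n / (2 * τ - 2 * η * Real.log n))
          * ((∑ i, a i) + (∑ j, b j))
        + 1 / (6 * Real.log n) := by
  have hN : (1 : ℝ) < n := by exact_mod_cast hn
  have hne : (univ : Finset (Fin n)).Nonempty := univ_nonempty_iff.2 ⟨⟨0, by omega⟩⟩
  have hcrit := entUOTRadialDeriv_eq_zero_of_isMin (fun i => (ha i).ne') (fun j => (hb j).ne')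
    hXstar hmin
  exact le_of_mul_log_div_le_zero hN hη hητ (sum_pos (fun i _ => ha i) hne)
    (sum_pos (fun j _ => hb j) hne) (sum_nonneg fun i _ => sum_nonneg fun j _ => hXstar i j)
    ((mass_mul_log_le_entUOTRadialDeriv ha hb hC hτ.le hη.le hXstar).trans hcrit.le)
end
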